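/- arXiv:1412.6456 — 2 statements merged into one kernel-verified Lean document; each statement's English description precedes it below -/
import Mathlib

section
/- Let R be a commutative noetherian local ring and M a finitely generated R-module. If M satisfies Serre's condition (S_1), then M is torsion-free, i.e., every non-zerodivisor of R is a non-zerodivisor on M. -/
/-!
If a non-zerodivisor `r` of `R` killed some `x ≠ 0` in `M`, it would lie in an associated prime
`p` of `M`. The maximal ideal of `R_p` is then associated to `M_p`, so `depth M_p = 0`, and
`(S₁)` forces `height p = 0`: `p` is a minimal prime of `R`. But minimal primes consist of
zero divisors.
-/

open RingTheory.Sequence CategoryTheory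

universe u

noncomputable section

/-- Depth of a module: supremum of lengths of weakly regular sequences consisting of nonunits.
For a f.g. module over a noetherian local ring this is the usual depth, and the zero module
has depth `⊤`. -/
def rdepth (A : Type u) [CommRing A] (M : Type u) [AddCommGroup M] [Module A M] : ℕ∞ :=
  sSup {n : ℕ∞ | ∃ rs : List A, (rs.length : ℕ∞) = n ∧ (∀ r ∈ rs, r ∈ nonunits A) ∧
    RingTheory.Sequence.IsWeaklyRegular M rs}

/-- Serre's condition `(S_n)`. -/
def SerreCond (R : Type u) [CommRing R] (M : Type u) [AddCommGroup M] [Module R M] (n : ℕ) :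
    Prop :=
  ∀ (p : Ideal R) (hp : p.IsPrime), Nontrivial (LocalizedModule p.primeCompl M) →
    min (n : ℕ∞) (Order.height (⟨p, hp⟩ : PrimeSpectrum R)) ≤
      rdepth (Localization.AtPrime p) (LocalizedModule p.primeCompl M)

/-- `Tor_i^R(M, N)` as an object of `ModuleCat R`. -/
def TorModCat (R : Type u) [CommRing R] (i : ℕ) (M N : Type u) [AddCommGroup M] [Module R M]
    [AddCommGroup N] [Module R N] : ModuleCat.{u} R :=
  ((Tor (ModuleCat.{u} R) i).obj (ModuleCat.of R M)).obj (ModuleCat.of R N)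

/-- `Tor_i^R(M, N)` as a type (with its `R`-module structure given by instances below). -/
def TorM (R : Type u) [CommRing R] (i : ℕ) (M N : Type u) [AddCommGroup M] [Module R M]
    [AddCommGroup N] [Module R N] : Type u :=
  TorModCat R i M N

instance (R : Type u) [CommRing R] (i : ℕ) (M N : Type u) [AddCommGroup M] [Module R M]
    [AddCommGroup N] [Module R N] : AddCommGroup (TorM R i M N) :=
  inferInstanceAs (AddCommGroup (TorModCat R i M N))

instance (R : Type u) [CommRing R] (i : ℕ) (M N : Type u) [AddCommGroup M] [Module R M]
    [AddCommGroup N] [Module R N] : Module R (TorM R i M N) :=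
  inferInstanceAs (Module R (TorModCat R i M N))

/-- A regular local ring: noetherian local, whose maximal ideal is generated by a
(weakly) regular sequence. -/
def IsRegLocal (Q : Type u) [CommRing Q] : Prop :=
  IsNoetherianRing Q ∧ IsLocalRing Q ∧
    ∃ rs : List Q, RingTheory.Sequence.IsWeaklyRegular Q rs ∧ (∀ r ∈ rs, r ∈ nonunits Q) ∧
      Ideal.span {x | x ∈ rs} = Ideal.span (nonunits Q)

/-- A (local) complete intersection: noetherian local ring whose completion is a regular
local ring modulo a regular sequence (of nonunits). -/
def IsCIRing (R : Type u) [CommRing R] : Prop :=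
  IsNoetherianRing R ∧ IsLocalRing R ∧
    ∃ (Q : Type u) (_ : CommRing Q), IsRegLocal Q ∧
      ∃ rs : List Q, (∀ r ∈ rs, r ∈ nonunits Q) ∧ RingTheory.Sequence.IsWeaklyRegular Q rs ∧
        Nonempty ((Q ⧸ Ideal.span {x | x ∈ rs}) ≃+* AdicCompletion (Ideal.span (nonunits R)) R)

/-- A hypersurface: noetherian local ring whose completion is a regular local ring modulo
a single non-zerodivisor in the maximal ideal. -/
def IsHypersurfaceRing (R : Type u) [CommRing R] : Prop :=
  IsNoetherianRing R ∧ IsLocalRing R ∧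
    ∃ (Q : Type u) (_ : CommRing Q), IsRegLocal Q ∧
      ∃ f : Q, f ∈ nonunits Q ∧ f ∈ nonZeroDivisors Q ∧
        Nonempty ((Q ⧸ Ideal.span {f}) ≃+* AdicCompletion (Ideal.span (nonunits R)) R)

/-- Maximal Cohen-Macaulay module over a local ring: depth equals the Krull dimension. -/
def IsMCM (R : Type u) [CommRing R] (M : Type u) [AddCommGroup M] [Module R M] : Prop :=
  (rdepth R M : WithBot ℕ∞) = ringKrullDim R

/-- Cohen-Macaulay local ring. -/
def IsCMLocalRing (A : Type u) [CommRing A] : Prop :=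
  IsNoetherianRing A ∧ IsLocalRing A ∧ (rdepth A A : WithBot ℕ∞) = ringKrullDim A

/-- `M` has (constant) rank: free of the same rank at every minimal prime. -/
def HasRank (R : Type u) [CommRing R] (M : Type u) [AddCommGroup M] [Module R M] : Prop :=
  ∃ r : ℕ, ∀ (p : Ideal R) (hp : p.IsPrime), p ∈ minimalPrimes R →
    Nonempty ((LocalizedModule (@Ideal.primeCompl R _ p hp) M)
      ≃ₗ[Localization (@Ideal.primeCompl R _ p hp)]
      (Fin r → Localization (@Ideal.primeCompl R _ p hp)))

/-- Projective dimension at most `n`. -/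
def pdLE (R : Type u) [CommRing R] : ℕ → ∀ (M : Type u) [AddCommGroup M] [Module R M], Prop
  | 0, M, _, _ => Module.Projective R M
  | n+1, M, _, _ => ∃ (P : Type u) (_ : AddCommGroup P) (_ : Module R P),
      Module.Projective R P ∧ ∃ f : P →ₗ[R] M, Function.Surjective f ∧
        pdLE R n (LinearMap.ker f)

/-- Injective dimension at most `n`. -/
def idLE (R : Type u) [CommRing R] : ℕ → ∀ (M : Type u) [AddCommGroup M] [Module R M], Prop
  | 0, M, _, _ => Module.Injective R M
  | n+1, M, _, _ => ∃ (I : Type u) (_ : AddCommGroup I) (_ : Module R I),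
      Module.Injective R I ∧ ∃ f : M →ₗ[R] I, Function.Injective f ∧
        idLE R n (I ⧸ LinearMap.range f)

/-- Gorenstein local ring: noetherian local with finite self-injective dimension. -/
def IsGorensteinLocalRing (R : Type u) [CommRing R] : Prop :=
  IsNoetherianRing R ∧ IsLocalRing R ∧ ∃ n : ℕ, idLE R n R

/-- The map `M → R^ν` obtained from a free cover `ε : R^ν ↠ M^*` by dualizing and composing
with the biduality map; its cokernel is the pushforward `M₁`. -/
def pushMap (R M : Type u) [CommRing R] [AddCommGroup M] [Module R M] {ν : ℕ}
    (ε : (Fin ν → R) →ₗ[R] Module.Dual R M) : M →ₗ[R] (Fin ν → R) where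
  toFun m := fun i => ε (Pi.single i 1) m
  map_add' x y := by funext i; simp
  map_smul' r x := by funext i; simp

/-- Length of a module, as the Krull dimension of its lattice of submodules. -/
def mlen (R : Type u) [CommRing R] (M : Type u) [AddCommGroup M] [Module R M] :
    WithBot ℕ∞ :=
  Order.krullDim (Submodule R M)

/-- An unramified regular local ring: equicharacteristic (contains a field), or of mixed
characteristic `(0, p)` with `p` not in the square of the maximal ideal. -/
def IsUnramifiedRegLocal (Q : Type u) [CommRing Q] : Prop :=
  IsRegLocal Q ∧
    ((∃ (K : Type u) (_ : Field K), Nonempty (K →+* Q)) ∨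
     (CharZero Q ∧ ∃ p : ℕ, p.Prime ∧ (p : Q) ∈ nonunits Q ∧
        (p : Q) ∉ (Ideal.span (nonunits Q)) ^ 2))

open IsLocalRing

lemma rdepth_eq_zero_of_maximalIdeal_mem_associatedPrimes {A : Type u} [CommRing A]
    [IsNoetherianRing A] [IsLocalRing A] {N : Type u} [AddCommGroup N] [Module A N]
    (h : maximalIdeal A ∈ associatedPrimes A N) : rdepth A N = 0 := by
  refine le_antisymm (sSup_le ?_) bot_le
  rintro n ⟨rs, rfl, hnonunits, hreg⟩
  cases rs with
  | nil => simp
  | cons a rs =>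
    have ha : a ∈ maximalIdeal A := hnonunits a List.mem_cons_self
    have hzd : a ∈ ⋃ p ∈ associatedPrimes A N, (p : Set A) := Set.mem_biUnion h ha
    rw [biUnion_associatedPrimes_eq_compl_regular] at hzd
    exact absurd (isWeaklyRegular_cons_iff N a rs |>.mp hreg).1 hzd

lemma SerreCond.mem_minimalPrimes_of_mem_associatedPrimes {R : Type u} [CommRing R]
    [IsNoetherianRing R] {M : Type u} [AddCommGroup M] [Module R M] (h : SerreCond R M 1)
    {p : Ideal R} (hp : p ∈ associatedPrimes R M) : p ∈ minimalPrimes R := by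
  have hprime := hp.isPrime
  have hmax := Module.associatedPrimes.mem_associatedPrimes_atPrime_of_mem_associatedPrimes hp
  have hnontriv : Nontrivial (LocalizedModule p.primeCompl M) :=
    not_subsingleton_iff_nontrivial.mp fun _ ↦ not_isAssociatedPrime_of_subsingleton hmax
  have hheight := h p hprime hnontriv
  rw [rdepth_eq_zero_of_maximalIdeal_mem_associatedPrimes hmax, min_le_iff, Nat.cast_one,
    ← PrimeSpectrum.height_eq_orderHeight] at hheight
  rw [← Ideal.height_eq_zero_iff, ← nonpos_iff_eq_zero]
  exact hheight.resolve_left (by simp)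

theorem stmt0_general (R : Type u) [CommRing R] [IsNoetherianRing R]
    (M : Type u) [AddCommGroup M] [Module R M]
    (h : SerreCond R M 1) :
    ∀ r ∈ nonZeroDivisors R, ∀ x : M, r • x = 0 → x = 0 := by
  intro r hr x hrx
  by_contra hx
  have hzd : r ∈ ⋃ p ∈ associatedPrimes R M, (p : Set R) := by
    rw [biUnion_associatedPrimes_eq_zero_divisors]
    exact ⟨x, hx, hrx⟩
  obtain ⟨p, hp, hrp⟩ := Set.mem_iUnion₂.mp hzd
  exact notMem_nonZeroDivisors_of_mem_mem_minimalPrimes hrp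
    (h.mem_minimalPrimes_of_mem_associatedPrimes hp) hr

/-- over a noetherian local ring, `(S_1)` implies torsion-free. -/
theorem stmt0 (R : Type u) [CommRing R] [IsNoetherianRing R] [IsLocalRing R]
    (M : Type u) [AddCommGroup M] [Module R M] [Module.Finite R M]
    (h : SerreCond R M 1) :
    ∀ r ∈ nonZeroDivisors R, ∀ x : M, r • x = 0 → x = 0 :=
  stmt0_general R M h

end
end

section
/- Let R be a commutative noetherian local ring and M, N nonzero finitely generated R-modules such that M ⊗_R N is torsion-free. Then M ⊗_R N ≅ M ⊗_R (N/t_R N). Moreover, if Tor_1^R(M, N/t_R N) = 0, then t_R N = 0, i.e., N is torsion-free. -/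
open RingTheory.Sequence CategoryTheory

universe u

noncomputable section

/-!
The image of `M ⊗ tN` in `M ⊗ N` is torsion, hence zero when `M ⊗ N` is torsion-free, so right
exactness of `M ⊗ -` on `0 → tN → N → N/tN → 0` gives `M ⊗ N ≅ M ⊗ (N/tN)`. If moreover
`Tor₁(M, N/tN) = 0`, the map `M ⊗ tN → M ⊗ N` is also injective, so `M ⊗ tN = 0`; by Nakayama's
lemma over the local ring `R` (a tensor product of nonzero finitely generated modules is nonzero)
this forces `tN = 0`.
-/

section

open TensorProduct LinearMap

variable {R M N : Type*} [CommRing R] [AddCommGroup M] [Module R M] [AddCommGroup N] [Module R N]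

lemma range_lTensor_le_torsion_of_isTorsion {T : Type*} [AddCommGroup T] [Module R T]
    (hT : Module.IsTorsion R T) (f : T →ₗ[R] N) :
    range (lTensor M f) ≤ Submodule.torsion R (M ⊗[R] N) := by
  rintro _ ⟨x, rfl⟩
  induction x using TensorProduct.induction_on with
  | zero => simp
  | tmul m t =>
    obtain ⟨a, ha⟩ := @hT t
    exact ⟨a, by
      rw [lTensor_tmul, Submonoid.smul_def, ← tmul_smul, ← map_smul, ← Submonoid.smul_def, ha,
        map_zero, tmul_zero]⟩
  | add x y hx hy => rw [map_add]; exact add_mem hx hy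

lemma lTensor_mkQ_bijective_of_lTensor_subtype_eq_zero (P : Submodule R N)
    (h : lTensor M P.subtype = 0) : Function.Bijective (lTensor M P.mkQ) :=
  ⟨by rw [← ker_eq_bot, lTensor_mkQ, h, range_zero], lTensor_surjective M P.mkQ_surjective⟩

lemma lTensor_injective_of_exact_lTensor_comp {P₁ P₂ K F : Type*} [AddCommGroup P₁]
    [Module R P₁] [AddCommGroup P₂] [Module R P₂] [AddCommGroup K] [Module R K] [AddCommGroup F]
    [Module R F] (d : P₂ →ₗ[R] P₁) (e : P₁ →ₗ[R] K) (ι : K →ₗ[R] F) (he : Function.Surjective e)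
    (hed : e ∘ₗ d = 0) (hexact : Function.Exact (lTensor M d) (lTensor M (ι ∘ₗ e))) :
    Function.Injective (lTensor M ι) := by
  rw [injective_iff_map_eq_zero]
  intro x hx
  obtain ⟨y, rfl⟩ := lTensor_surjective M he x
  obtain ⟨z, rfl⟩ := (hexact y).1 (by rwa [lTensor_comp, LinearMap.comp_apply])
  rw [← LinearMap.comp_apply, ← lTensor_comp, hed, lTensor_zero, LinearMap.zero_apply]

theorem IsLocalRing.nontrivial_tensorProduct [IsLocalRing R] [Module.Finite R M]
    [Module.Finite R N] [Nontrivial M] [Nontrivial N] : Nontrivial (M ⊗[R] N) := by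
  let k := IsLocalRing.ResidueField R
  have : Nontrivial (k ⊗[R] M) := by
    rw [← not_subsingleton_iff_nontrivial, IsLocalRing.subsingleton_tensorProduct]
    exact not_subsingleton M
  have hN : Nontrivial (k ⊗[R] N) := by
    rw [← not_subsingleton_iff_nontrivial, IsLocalRing.subsingleton_tensorProduct]
    exact not_subsingleton N
  have : Nontrivial ((k ⊗[R] M) ⊗[k] (k ⊗[R] N)) :=
    (Module.FaithfullyFlat.nontrivial_tensorProduct_iff_right k (k ⊗[R] M)).2 hN
  have : Nontrivial (k ⊗[R] (M ⊗[R] N)) :=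
    (AlgebraTensorModule.distribBaseChange R k M N).toEquiv.nontrivial
  rw [← not_subsingleton_iff_nontrivial, ← IsLocalRing.subsingleton_tensorProduct (R := R)]
  exact not_subsingleton _

end

namespace CategoryTheory.ProjectiveResolution

open Limits

variable {C : Type*} [Category* C] [Abelian C] [EnoughProjectives C] {Z P₀ P₁ : C}

def syzygyStep {X₀ X₁ : C} (f : X₁ ⟶ X₀) : Σ' (X₂ : C) (d : X₂ ⟶ X₁), d ≫ f = 0 :=
  ⟨_, Projective.d f, by erw [Category.assoc, kernel.condition, comp_zero]⟩

/-- `P₁ ⟶ P₀` continued to the left by chosen syzygies. -/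
def presentationComplex (d : P₁ ⟶ P₀) : ChainComplex C ℕ :=
  ChainComplex.mk' P₀ P₁ d syzygyStep

variable (d : P₁ ⟶ P₀)

@[simp]
lemma presentationComplex_d_1_0 : (presentationComplex d).d 1 0 = d := by
  simp [presentationComplex]

lemma presentationComplex_exactAt_succ (n : ℕ) : (presentationComplex d).ExactAt (n + 1) := by
  rw [HomologicalComplex.exactAt_iff' _ (n + 2) (n + 1) n (by simp) (by simp)]
  refine ShortComplex.exact_of_iso ?_ (exact_d_f ((presentationComplex d).d (n + 1) n))
  exact ShortComplex.isoMk (ChainComplex.mk'XIso P₀ P₁ d syzygyStep n).symm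
    (Iso.refl _) (Iso.refl _)
    (by
      change _ ≫ (presentationComplex d).d (n + 2) (n + 1) = Projective.d _ ≫ 𝟙 _
      erw [ChainComplex.mk'_d, Iso.inv_hom_id_assoc, Category.comp_id]
      rfl)
    (by erw [Category.id_comp, Category.comp_id]; rfl)

instance [Projective P₀] [Projective P₁] (n : ℕ) : Projective ((presentationComplex d).X n) := by
  obtain (_ | _ | _ | n) := n
  · exact (inferInstance : Projective P₀)
  · exact (inferInstance : Projective P₁)
  all_goals apply Projective.projective_over

def ofPresentation [Projective P₀] [Projective P₁] (π : P₀ ⟶ Z) [Epi π] (hd : d ≫ π = 0)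
    (hex : (ShortComplex.mk d π hd).Exact) : ProjectiveResolution Z where
  complex := presentationComplex d
  π := (ChainComplex.toSingle₀Equiv _ _).symm ⟨π, by rw [presentationComplex_d_1_0]; exact hd⟩
  quasiIso := ⟨fun n => by
    cases n
    · rw [ChainComplex.quasiIsoAt₀_iff, ShortComplex.quasiIso_iff_of_zeros']
      · refine (ShortComplex.exact_and_epi_g_iff_of_iso ?_).2 ⟨hex, by dsimp; infer_instance⟩
        exact ShortComplex.isoMk (Iso.refl _) (Iso.refl _) (Iso.refl _)
          (by erw [Category.id_comp, Category.comp_id]; exact (presentationComplex_d_1_0 d).symm)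
          (by
            erw [Category.id_comp, Category.comp_id]
            exact (ChainComplex.toSingle₀Equiv_symm_apply_f_zero
              (C := presentationComplex d) π _).symm)
      all_goals rfl
    · rw [quasiIsoAt_iff_exactAt']
      · apply presentationComplex_exactAt_succ
      · apply ChainComplex.exactAt_succ_single_obj⟩

end CategoryTheory.ProjectiveResolution

section

open LinearMap

variable {R : Type u} [CommRing R] {M : Type u} [AddCommGroup M] [Module R M]

lemma CategoryTheory.ProjectiveResolution.exact_lTensor_of_subsingleton_tor {C : Type u}
    [AddCommGroup C] [Module R C] (P : ProjectiveResolution (ModuleCat.of R C))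
    (h : Subsingleton (TorM R 1 M C)) :
    Function.Exact (lTensor M (P.complex.d 2 1).hom) (lTensor M (P.complex.d 1 0).hom) := by
  let T := (MonoidalCategory.tensoringLeft (ModuleCat.{u} R)).obj (ModuleCat.of R M)
  have : Subsingleton ((T.leftDerived 1).obj (ModuleCat.of R C)) := h
  have hzero : Limits.IsZero (((T.mapHomologicalComplex _).obj P.complex).homology 1) :=
    (ModuleCat.isZero_of_subsingleton _).of_iso (P.isoLeftDerivedObj T 1).symm
  rw [← HomologicalComplex.exactAt_iff_isZero_homology,
    HomologicalComplex.exactAt_iff' _ 2 1 0 (by simp) (by simp),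
    ShortComplex.ShortExact.moduleCat_exact_iff_function_exact] at hzero
  exact hzero

theorem lTensor_ker_subtype_injective_of_subsingleton_tor {F C : Type u} [AddCommGroup F]
    [Module R F] [Module.Projective R F] [AddCommGroup C] [Module R C] (q : F →ₗ[R] C)
    (hq : Function.Surjective q) (h : Subsingleton (TorM R 1 M C)) :
    Function.Injective (lTensor M (ker q).subtype) := by
  -- Compute `Tor₁(M, C)` with a projective resolution beginning `R^(ker q) ⟶ F ⟶ C`.
  let e := Finsupp.linearCombination R (id : ker q → ker q)
  have he : Function.Surjective e := Finsupp.linearCombination_id_surjective R (ker q)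
  let d₀ : ModuleCat.of R (ker q →₀ R) ⟶ ModuleCat.of R F := ModuleCat.ofHom ((ker q).subtype ∘ₗ e)
  let π : ModuleCat.of R F ⟶ ModuleCat.of R C := ModuleCat.ofHom q
  have : Epi π := (ModuleCat.epi_iff_surjective _).2 hq
  have hd : d₀ ≫ π = 0 := ModuleCat.hom_ext (LinearMap.ext fun x => (e x).2)
  have hex : (ShortComplex.mk d₀ π hd).Exact := by
    rw [ShortComplex.moduleCat_exact_iff]
    intro x hx
    obtain ⟨y, hy⟩ := he ⟨x, hx⟩
    exact ⟨y, congrArg Subtype.val hy⟩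
  let P := ProjectiveResolution.ofPresentation d₀ π hd hex
  have hexact := P.exact_lTensor_of_subsingleton_tor h
  have hd₁₀ : P.complex.d 1 0 = d₀ := ProjectiveResolution.presentationComplex_d_1_0 d₀
  rw [hd₁₀] at hexact
  refine lTensor_injective_of_exact_lTensor_comp (P.complex.d 2 1).hom e _ he ?_ hexact
  ext z : 1
  exact Subtype.ext (LinearMap.congr_fun (congrArg ModuleCat.Hom.hom (P.complex.d_comp_d 2 1 0)) z)

theorem lTensor_subtype_injective_of_subsingleton_tor {B : Type u} [AddCommGroup B] [Module R B]
    (A : Submodule R B) (h : Subsingleton (TorM R 1 M (B ⧸ A))) :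
    Function.Injective (lTensor M A.subtype) := by
  obtain ⟨F, _, _, _, p, hp⟩ : ∃ (F : Type u) (_ : AddCommGroup F) (_ : Module R F)
      (_ : Module.Projective R F) (p : F →ₗ[R] B), Function.Surjective p :=
    ⟨B →₀ R, _, _, inferInstance, _, Finsupp.linearCombination_id_surjective R B⟩
  -- `K = p⁻¹(A)` maps onto `A` with kernel `ker p`, and `M ⊗ K → M ⊗ F` is injective.
  let K := ker (A.mkQ ∘ₗ p)
  have hK : ∀ x, x ∈ K ↔ p x ∈ A := fun x => by simp [K]
  have hKinj : Function.Injective (lTensor M K.subtype) :=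
    lTensor_ker_subtype_injective_of_subsingleton_tor _ (A.mkQ_surjective.comp hp) h
  let p' : K →ₗ[R] A := p.restrict fun x hx => (hK x).1 hx
  have hp' : Function.Surjective p' := by
    rintro ⟨b, hb⟩
    obtain ⟨x, rfl⟩ := hp b
    exact ⟨⟨x, (hK x).2 hb⟩, rfl⟩
  have hLK : ker p ≤ K := fun x hx => (hK x).2 (by rw [mem_ker.1 hx]; exact zero_mem _)
  have hexact := lTensor_exact M (exact_subtype_ker_map p) hp
  rw [show (ker p).subtype = K.subtype ∘ₗ Submodule.inclusion hLK from rfl, lTensor_comp] at hexact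
  refine lTensor_injective_of_exact_lTensor_comp (Submodule.inclusion hLK) p' A.subtype hp'
    (by ext ⟨x, hx⟩; exact mem_ker.1 hx) ?_
  rw [show A.subtype ∘ₗ p' = p ∘ₗ K.subtype from rfl, lTensor_comp]
  intro y
  exact (hexact _).trans ⟨fun ⟨z, hz⟩ => ⟨z, hKinj hz⟩, fun ⟨z, hz⟩ => ⟨z, by rw [← hz]; rfl⟩⟩

end

open TensorProduct LinearMap in
theorem stmt6_general (R : Type u) [CommRing R] [IsNoetherianRing R] [IsLocalRing R]
    (M N : Type u) [AddCommGroup M] [Module R M] [Module.Finite R M] [Nontrivial M]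
    [AddCommGroup N] [Module R N] [Module.Finite R N]
    (htf : Submodule.torsion R (TensorProduct R M N) = ⊥) :
    Nonempty ((TensorProduct R M N) ≃ₗ[R]
      (TensorProduct R M (N ⧸ Submodule.torsion R N))) ∧
    (Subsingleton (TorM R 1 M (N ⧸ Submodule.torsion R N)) →
      Submodule.torsion R N = ⊥) := by
  have hzero : lTensor M (Submodule.torsion R N).subtype = 0 :=
    range_eq_bot.1 <| eq_bot_iff.2 <|
      htf ▸ range_lTensor_le_torsion_of_isTorsion Submodule.torsion_isTorsion _
  refine ⟨⟨.ofBijective _ (lTensor_mkQ_bijective_of_lTensor_subtype_eq_zero _ hzero)⟩,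
    fun hTor => ?_⟩
  have hinj := lTensor_subtype_injective_of_subsingleton_tor _ hTor
  have : Subsingleton (M ⊗[R] Submodule.torsion R N) :=
    ⟨fun x y => hinj (by simp only [hzero, LinearMap.zero_apply])⟩
  by_contra hne
  have : Nontrivial (Submodule.torsion R N) := Submodule.nontrivial_iff_ne_bot.2 hne
  exact not_nontrivial (M ⊗[R] Submodule.torsion R N) IsLocalRing.nontrivial_tensorProduct

/-- if `M ⊗ N` is torsion-free then `M ⊗ N ≅ M ⊗ (N/tN)`; moreover if
`Tor_1(M, N/tN) = 0` then `N` is torsion-free. -/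
theorem stmt6 (R : Type u) [CommRing R] [IsNoetherianRing R] [IsLocalRing R]
    (M N : Type u) [AddCommGroup M] [Module R M] [Module.Finite R M] [Nontrivial M]
    [AddCommGroup N] [Module R N] [Module.Finite R N] [Nontrivial N]
    (htf : Submodule.torsion R (TensorProduct R M N) = ⊥) :
    Nonempty ((TensorProduct R M N) ≃ₗ[R]
      (TensorProduct R M (N ⧸ Submodule.torsion R N))) ∧
    (Subsingleton (TorM R 1 M (N ⧸ Submodule.torsion R N)) →
      Submodule.torsion R N = ⊥) :=
  stmt6_general R M N htf

end
end
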